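/- Let $(G,K)$ be a proper pair with associated homological element $x \in \mathfrak{k}_{\bar 1}$. Then for any $G$-module $M$ there is an isomorphism $DS_x \operatorname{Ind}^G_K M \simeq DS_x M$. -/

import Mathlib

open CategoryTheory MonoidalCategory Limits

attribute [local instance] CategoryTheory.Abelian.hasFiniteBiproducts

universe w v u

section BasicDefs

variable {C : Type v} [Category.{w} C]

/-- `A` is a direct summand of `X`. -/
def IsDirectSummand (A X : C) : Prop :=
  ∃ (i : A ⟶ X) (r : X ⟶ A), i ≫ r = 𝟙 A

/-- The relation on a preadditive category identifying two morphisms whose difference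
factors through a projective object; the quotient is the stable category. -/
def stableRel [Preadditive C] : HomRel C :=
  fun {X Y} f g => ∃ (P : C) (_ : Projective P) (u : X ⟶ P) (v : P ⟶ Y), f - g = u ≫ v

variable [MonoidalCategory C] [SymmetricCategory C] [RightRigidCategory C]

/-- The categorical trace (supertrace) of an endomorphism in a symmetric rigid category. -/
noncomputable def catTrace {X : C} (f : X ⟶ X) : End (𝟙_ C) :=
  η_ X Xᘁ ≫ (β_ X Xᘁ).hom ≫ (Xᘁ ◁ f) ≫ ε_ X Xᘁ

/-- The categorical (super)dimension of an object. -/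
noncomputable def sdim (X : C) : End (𝟙_ C) :=
  catTrace (𝟙 X)

/-- A morphism `f : X ⟶ Y` is negligible if `tr (f ≫ g) = 0` for every `g : Y ⟶ X`. -/
def Negligible [Preadditive C] {X Y : C} (f : X ⟶ Y) : Prop :=
  ∀ g : Y ⟶ X, catTrace (f ≫ g) = 0

/-- The tensor ideal of negligible morphisms, as a `HomRel`; the quotient is
the semisimplification. -/
def negligibleRel [Preadditive C] : HomRel C :=
  fun {_ _} f g => Negligible (f - g)

end BasicDefs

/-- An abstract interface for the representation theory of complex quasireductive
algebraic supergroups, bundling the notions used in the paper. -/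
structure SupergroupTheory where
  /-- the type of algebraic supergroups over ℂ -/
  Grp : Type u
  /-- `Sub K G` : `K` is a quasireductive closed subgroup of `G` -/
  Sub : Grp → Grp → Prop
  /-- the category of finite-dimensional representations -/
  Rep : Grp → Type v
  [instCat : ∀ G, Category.{w} (Rep G)]
  [instMon : ∀ G, MonoidalCategory (Rep G)]
  [instSym : ∀ G, SymmetricCategory (Rep G)]
  [instRig : ∀ G, RightRigidCategory (Rep G)]
  [instAb : ∀ G, Abelian (Rep G)]
  [instLin : ∀ G, Linear ℂ (Rep G)]
  /-- restriction functor -/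
  res : ∀ {K G : Grp}, Sub K G → (Rep G ⥤ Rep K)
  /-- induction functor -/
  ind : ∀ {K G : Grp}, Sub K G → (Rep K ⥤ Rep G)
  /-- Frobenius reciprocity: induction is right adjoint to restriction -/
  adj : ∀ {K G : Grp} (h : Sub K G), res h ⊣ ind h
  /-- restriction is a (symmetric) tensor functor -/
  [instResBraided : ∀ {K G : Grp} (h : Sub K G), (res h).Braided]
  [instResAdditive : ∀ {K G : Grp} (h : Sub K G), (res h).Additive]
  /-- `G` is a quasireductive supergroup -/
  IsQuasireductive : Grp → Prop
  /-- the normalizer `N_G(S)` of a subgroup `S ⊆ G` -/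
  normalizer : ∀ {S G : Grp}, Sub S G → Grp
  normalizer_sub : ∀ {S G : Grp} (h : Sub S G), Sub (normalizer h) G
  sub_normalizer : ∀ {S G : Grp} (h : Sub S G), Sub S (normalizer h)
  /-- the target category of the Duflo–Serganova functors (super vector spaces) -/
  sVec : Type v
  [instCatV : Category.{w} sVec]
  [instMonV : MonoidalCategory sVec]
  [instSymV : SymmetricCategory sVec]
  [instAbV : Abelian sVec]
  /-- homological odd elements `x ∈ 𝔤₁` ( `[x,x]` semisimple) of the Lie superalgebra of `G` -/
  HomOdd : Grp → Type u
  /-- a homological element of a subgroup is homological in the ambient group -/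
  homOddMap : ∀ {K G : Grp}, Sub K G → HomOdd K → HomOdd G
  /-- the Duflo–Serganova functor `DS_x : Rep G ⥤ sVec` -/
  DS : ∀ {G : Grp}, HomOdd G → (Rep G ⥤ sVec)
  [instDSBraided : ∀ {G : Grp} (x : HomOdd G), (DS x).Braided]
  /-- `𝔤/Z(𝔤)` contains no simple ideal isomorphic to `𝔭𝔰𝔮(n)`, `n ≥ 3` -/
  NoPsqIdeal : Grp → Prop
  /-- `G` is a connected affine algebraic supergroup with basic Lie superalgebra of defect 1,
  i.e. one of `SL(1|n+1)`, `SOSp(2|2n)`, `SOSp(3|2n)`, `SOSp(2m|2)`, `SOSp(2m+1|2)`,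
  `D(2,1;t)`, `AG(1|2)`, `AB(1|3)` up to isogeny -/
  IsBasicDefectOne : Grp → Prop
  /-- `S ⊆ G` is a root `SL(1|1)` subgroup (for a fixed Cartan subalgebra and
  root decomposition) -/
  IsRootSL11 : ∀ {S G : Grp}, Sub S G → Prop
  /-- for the normalizer `K = N_G(S)` of a Sylow subgroup of a defect one supergroup:
  the representations of `K` on which the finite central subgroup `Γ = P_x/P_α` acts
  trivially, i.e. the image of `Rep K/Γ` in `Rep K` -/
  GammaTrivial : ∀ {S G : Grp} (h : Sub S G), Rep (normalizer h) → Prop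
  /-- membership in the principal block -/
  inPrincipalBlock : ∀ G : Grp, Rep G → Prop
  trivial_in_principal : ∀ G : Grp, inPrincipalBlock G (𝟙_ (Rep G))
  /-- the contragredient duality functor -/
  contra : ∀ G : Grp, (Rep G)ᵒᵖ ⥤ Rep G
  /-- `G` is `GL(m|n)` or `OSp(m|2n)` (resp. `SOSp(m|2n)`) -/
  IsGLorOSp : Grp → Prop
  /-- `B` is a block of `Rep G` of atypicality degree (defect) `k` -/
  IsBlockOfAtypicality : ∀ (G : Grp), (Rep G → Prop) → ℕ → Prop
  /-- the atypicality degree of a simple module -/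
  atypicalityDeg : ∀ {G : Grp}, Rep G → ℕ
  /-- the standard subgroup `S_k = SL(1|1)^k` of the Sylow subgroup `S = SL(1|1)^d` of `G` -/
  standardSk : Grp → ℕ → Grp
  standardSk_sub : ∀ (G : Grp) (k : ℕ), Sub (standardSk G k) G
  /-- the rank of a homological element: the minimal `k` such that `G₀ · x ∩ 𝔰_k ≠ ∅` -/
  rk : ∀ {G : Grp}, HomOdd G → ℕ

namespace SupergroupTheory

attribute [instance] instCat instMon instSym instRig instAb instLin instCatV instMonV
  instSymV instAbV instResBraided instResAdditive instDSBraided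

variable (T : SupergroupTheory.{w, v, u})

/-- The canonical morphism `ℂ → Ind_K^G ℂ` given by Frobenius reciprocity. -/
noncomputable def unitMap {K G : T.Grp} (h : T.Sub K G) :
    𝟙_ (T.Rep G) ⟶ (T.ind h).obj (𝟙_ (T.Rep K)) :=
  ((T.adj h).homEquiv _ _) (Functor.Monoidal.εIso (T.res h)).inv

/-- `K` is a splitting subgroup of `G` : the canonical map `ℂ → Ind_K^G ℂ` splits. -/
def IsSplitting {K G : T.Grp} (h : T.Sub K G) : Prop :=
  ∃ r : (T.ind h).obj (𝟙_ (T.Rep K)) ⟶ 𝟙_ (T.Rep G),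
    T.unitMap h ≫ r = 𝟙 (𝟙_ (T.Rep G))

/-- A Sylow subgroup is a minimal splitting subgroup. -/
def IsSylow {S G : T.Grp} (h : T.Sub S G) : Prop :=
  T.IsSplitting h ∧
    ∀ {S' : T.Grp} (h' : T.Sub S' G), T.IsSplitting h' → T.Sub S' S → S' = S

/-- The pair `(G, K)` is proper: `K` is splitting in `G` and there is a homological
`x ∈ 𝔨₁` with `DS_x (Ind_K^G ℂ) = ℂ`. -/
def IsProperPair {K G : T.Grp} (h : T.Sub K G) : Prop :=
  T.IsSplitting h ∧ ∃ x : T.HomOdd K,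
    Nonempty ((T.DS (T.homOddMap h x)).obj ((T.ind h).obj (𝟙_ (T.Rep K))) ≅ 𝟙_ T.sVec)

/-- A `G`-module is `K`-projective (relatively projective with respect to `K ⊆ G`) if it
is a direct summand of a module induced from `K`. -/
def RelativelyProjective {K G : T.Grp} (h : T.Sub K G) (M : T.Rep G) : Prop :=
  ∃ V : T.Rep K, IsDirectSummand M ((T.ind h).obj V)

end SupergroupTheory

/-!
Restriction is monoidal and `M` is dualizable, so `Ind` satisfies the projection formula
`Ind (Res M ⊗ V) ≅ M ⊗ Ind V`; with `V = 𝟙` this gives `Ind (Res M) ≅ M ⊗ Ind ℂ`. Applying the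
monoidal functor `DS_x` and using `DS_x (Ind ℂ) ≅ ℂ` yields `DS_x (Ind (Res M)) ≅ DS_x M`.
-/

namespace CategoryTheory

open Functor.LaxMonoidal Functor.OplaxMonoidal

variable {C : Type*} [Category C] [MonoidalCategory C]
  {D : Type*} [Category D] [MonoidalCategory D]

@[reducible]
noncomputable def Functor.Monoidal.mapExactPairing (F : C ⥤ D) [F.Monoidal] (X Y : C)
    [ExactPairing X Y] : ExactPairing (F.obj X) (F.obj Y) where
  coevaluation' := ε F ≫ F.map (η_ X Y) ≫ δ F X Y
  evaluation' := μ F Y X ≫ F.map (ε_ X Y) ≫ η F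
  coevaluation_evaluation' := by
    have hassoc : F.obj Y ◁ δ F X Y ≫ (α_ (F.obj Y) (F.obj X) (F.obj Y)).inv ≫
          μ F Y X ▷ F.obj Y
        = μ F Y (X ⊗ Y) ≫ F.map (α_ Y X Y).inv ≫ δ F (Y ⊗ X) Y := by
      rw [← cancel_mono (μ F (Y ⊗ X) Y)]
      simp only [Category.assoc, Functor.Monoidal.δ_μ, Category.comp_id,
        ← Functor.LaxMonoidal.associativity_inv, Functor.Monoidal.whiskerLeft_δ_μ_assoc]
    simp only [MonoidalCategory.whiskerLeft_comp, MonoidalCategory.comp_whiskerRight,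
      Category.assoc]
    slice_lhs 3 5 => rw [hassoc]
    slice_lhs 2 3 => rw [μ_natural_right]
    slice_lhs 5 6 => rw [δ_natural_left]
    slice_lhs 3 5 => rw [← F.map_comp, ← F.map_comp, ExactPairing.coevaluation_evaluation]
    simp [Functor.LaxMonoidal.right_unitality, Functor.OplaxMonoidal.left_unitality]
  evaluation_coevaluation' := by
    have hassoc : δ F X Y ▷ F.obj X ≫ (α_ (F.obj X) (F.obj Y) (F.obj X)).hom ≫
          F.obj X ◁ μ F Y X
        = μ F (X ⊗ Y) X ≫ F.map (α_ X Y X).hom ≫ δ F X (Y ⊗ X) := by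
      rw [← cancel_epi (δ F (X ⊗ Y) X)]
      simp only [Functor.Monoidal.δ_μ_assoc, Functor.OplaxMonoidal.associativity_assoc,
        Functor.Monoidal.whiskerLeft_δ_μ, Category.comp_id]
    simp only [MonoidalCategory.whiskerLeft_comp, MonoidalCategory.comp_whiskerRight,
      Category.assoc]
    slice_lhs 3 5 => rw [hassoc]
    slice_lhs 2 3 => rw [μ_natural_left]
    slice_lhs 5 6 => rw [δ_natural_right]
    slice_lhs 3 5 => rw [← F.map_comp, ← F.map_comp, ExactPairing.evaluation_coevaluation]
    simp [Functor.LaxMonoidal.left_unitality, Functor.OplaxMonoidal.right_unitality]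

namespace Adjunction

variable {F : C ⥤ D} {U : D ⥤ C} [F.Monoidal] (A : F ⊣ U) (M : C) [HasRightDual M]

/-- Both sides are right adjoint to `V ↦ F (Mᘁ ⊗ V) ≅ F Mᘁ ⊗ F V`. -/
noncomputable def projectionFormula (V : D) : M ⊗ U.obj V ≅ U.obj (F.obj M ⊗ V) :=
  letI : ExactPairing (F.obj M) (F.obj Mᘁ) := Functor.Monoidal.mapExactPairing F M Mᘁ
  have adjTensorThenU : tensorLeft Mᘁ ⋙ F ⊣ U ⋙ tensorLeft M :=
    (tensorLeftAdjunction M Mᘁ).comp A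
  have adjUThenTensor : tensorLeft Mᘁ ⋙ F ⊣ tensorLeft (F.obj M) ⋙ U :=
    (A.comp (tensorLeftAdjunction (F.obj M) (F.obj Mᘁ))).ofNatIsoLeft
      (Functor.Monoidal.commTensorLeft F Mᘁ)
  (adjTensorThenU.rightAdjointUniq adjUThenTensor).app V

noncomputable def rightAdjointObjLeftAdjointObjIso :
    U.obj (F.obj M) ≅ M ⊗ U.obj (𝟙_ D) :=
  U.mapIso (ρ_ _).symm ≪≫ (A.projectionFormula M (𝟙_ D)).symm

end Adjunction

end CategoryTheory

theorem statement12_general (T : SupergroupTheory) {K G : T.Grp} (h : T.Sub K G)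
    (x : T.HomOdd K)
    (hx : Nonempty ((T.DS (T.homOddMap h x)).obj ((T.ind h).obj (𝟙_ (T.Rep K)))
      ≅ 𝟙_ T.sVec))
    (M : T.Rep G) :
    Nonempty ((T.DS (T.homOddMap h x)).obj ((T.ind h).obj ((T.res h).obj M))
      ≅ (T.DS (T.homOddMap h x)).obj M) := by
  obtain ⟨e⟩ := hx
  let DSx := T.DS (T.homOddMap h x)
  exact ⟨DSx.mapIso ((T.adj h).rightAdjointObjLeftAdjointObjIso M) ≪≫
    (Functor.Monoidal.μIso DSx _ _).symm ≪≫ whiskerLeftIso _ e ≪≫ ρ_ _⟩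

/-- Let `(G, K)` be a proper pair with associated homological element
`x ∈ 𝔨₁` (so `K` is splitting in `G` and `DS_x (Ind^G_K ℂ) = ℂ`).  Then for any
`G`-module `M` there is an isomorphism `DS_x (Ind^G_K M) ≅ DS_x M`. -/
theorem statement12 (T : SupergroupTheory) {K G : T.Grp} (h : T.Sub K G)
    (hG : T.IsQuasireductive G) (hK : T.IsQuasireductive K)
    (hsplit : T.IsSplitting h) (x : T.HomOdd K)
    (hx : Nonempty ((T.DS (T.homOddMap h x)).obj ((T.ind h).obj (𝟙_ (T.Rep K)))
      ≅ 𝟙_ T.sVec))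
    (M : T.Rep G) :
    Nonempty ((T.DS (T.homOddMap h x)).obj ((T.ind h).obj ((T.res h).obj M))
      ≅ (T.DS (T.homOddMap h x)).obj M) :=
  statement12_general T h x hx M
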